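/- Let n ≥ 2 and let (σ_H, g) be a normalized pair, with σ_H(a′, a) = ∏_{i=1}^{n−1} λ_i^{a′_n a_{in}}. Set λ_{i,jn} := g(v_{jn}, u_i) for 1 ≤ i, j ≤ n−1 and λ_{n,jn} := λ_j for 1 ≤ j ≤ n−1. Then for all a, a′ ∈ H(n) and b, b′ ∈ G(n−1) the multiplier τ(a′b, ab′) := σ_H(a′, α_b(a)) g(a,b) of G(n) is given by τ(a′b, ab′) = ∏_{1≤i<j≤n−1} λ_{i,jn}^{a_{jn} b_i + a_n b_{ij}} λ_{j,in}^{a_{in} b_j + a_n(b_i b_j − b_{ij})} · ∏_{j=1}^{n−1} λ_{j,jn}^{a_{jn} b_j + a_n b_j (b_j − 1)/2} · ∏_{j=1}^{n−1} λ_{n,jn}^{a′_n(a_{jn} + b_j a_n) + b_j a_n (a_n − 1)/2} (all exponents are integers). -/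

import Mathlib

open scoped BigOperators

namespace FreeNilp

/-- Index set for pairs `(j,k)` with `j < k`. -/
abbrev PairIdx (n : ℕ) : Type := {p : Fin n × Fin n // p.1 < p.2}

/-- The free nilpotent group of class 2 and rank `n`, realized on
`ℤ^n × ℤ^{n(n-1)/2}`. -/
@[ext] structure G (n : ℕ) where
  u : Fin n → ℤ
  v : PairIdx n → ℤ

namespace G

instance (n : ℕ) : Group (G n) where
  mul r s := ⟨fun i => r.u i + s.u i, fun p => r.v p + s.v p + r.u p.1.1 * s.u p.1.2⟩
  one := ⟨fun _ => 0, fun _ => 0⟩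
  inv r := ⟨fun i => -r.u i, fun p => -r.v p + r.u p.1.1 * r.u p.1.2⟩
  mul_assoc r s t := by
    refine G.ext ?_ ?_ <;> funext x
    · show (r.u x + s.u x) + t.u x = r.u x + (s.u x + t.u x)
      ring
    · show (r.v x + s.v x + r.u x.1.1 * s.u x.1.2) + t.v x +
          (r.u x.1.1 + s.u x.1.1) * t.u x.1.2 =
        r.v x + (s.v x + t.v x + s.u x.1.1 * t.u x.1.2) +
          r.u x.1.1 * (s.u x.1.2 + t.u x.1.2)
      ring
  one_mul r := by
    refine G.ext ?_ ?_ <;> funext x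
    · show 0 + r.u x = r.u x
      ring
    · show 0 + r.v x + 0 * r.u x.1.2 = r.v x
      ring
  mul_one r := by
    refine G.ext ?_ ?_ <;> funext x
    · show r.u x + 0 = r.u x
      ring
    · show r.v x + 0 + r.u x.1.1 * 0 = r.v x
      ring
  inv_mul_cancel r := by
    refine G.ext ?_ ?_ <;> funext x
    · show -r.u x + r.u x = 0
      ring
    · show (-r.v x + r.u x.1.1 * r.u x.1.2) + r.v x + -r.u x.1.1 * r.u x.1.2 = 0
      ring

@[simp] lemma mul_u {n : ℕ} (r s : G n) (i : Fin n) : (r * s).u i = r.u i + s.u i := rfl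
@[simp] lemma mul_v {n : ℕ} (r s : G n) (p : PairIdx n) :
    (r * s).v p = r.v p + s.v p + r.u p.1.1 * s.u p.1.2 := rfl
@[simp] lemma one_u {n : ℕ} (i : Fin n) : (1 : G n).u i = 0 := rfl
@[simp] lemma one_v {n : ℕ} (p : PairIdx n) : (1 : G n).v p = 0 := rfl
@[simp] lemma inv_u {n : ℕ} (r : G n) (i : Fin n) : (r⁻¹).u i = -r.u i := rfl
@[simp] lemma inv_v {n : ℕ} (r : G n) (p : PairIdx n) :
    (r⁻¹).v p = -r.v p + r.u p.1.1 * r.u p.1.2 := rfl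

end G

/-- First-block coordinate `r_i`. -/
def uc {n : ℕ} (r : G n) (i : Fin n) : ℤ := r.u i

/-- Second-block coordinate `r_{jk}` (zero unless `j < k`). -/
def vc {n : ℕ} (r : G n) (j k : Fin n) : ℤ := if h : j < k then r.v ⟨(j, k), h⟩ else 0

/-- A multiplier (2-cocycle with values in the circle group) of a group. -/
def IsMultiplier {Γ : Type*} [Group Γ] (σ : Γ → Γ → Circle) : Prop :=
  (∀ r s t : Γ, σ r s * σ (r * s) t = σ r (s * t) * σ s t) ∧
  ∀ r : Γ, σ r 1 = 1 ∧ σ 1 r = 1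

/-- Similarity (cohomology) of multipliers. -/
def Similar {Γ : Type*} [Group Γ] (σ τ : Γ → Γ → Circle) : Prop :=
  ∃ β : Γ → Circle, ∀ r s : Γ, τ r s = β r * β s * (β (r * s))⁻¹ * σ r s

/-- The subgroup `H(n) ≅ ℤⁿ` of `G n`: only the coordinates `r_n` and `r_{jn}` may
be nonzero. -/
def Hsub (n : ℕ) : Subgroup (G n) where
  carrier := {r | (∀ i : Fin n, (i : ℕ) + 1 < n → r.u i = 0) ∧
                  ∀ p : PairIdx n, (p.1.2 : ℕ) + 1 < n → r.v p = 0}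
  one_mem' := ⟨fun _ _ => rfl, fun _ _ => rfl⟩
  mul_mem' := by
    rintro r s ⟨hr1, hr2⟩ ⟨hs1, hs2⟩
    refine ⟨fun i hi => ?_, fun p hp => ?_⟩
    · simp [hr1 i hi, hs1 i hi]
    · simp [hr2 p hp, hs2 p hp, hs1 p.1.2 hp]
  inv_mem' := by
    rintro r ⟨hr1, hr2⟩
    refine ⟨fun i hi => ?_, fun p hp => ?_⟩
    · simp [hr1 i hi]
    · simp [hr2 p hp, hr1 p.1.2 hp]

/-- The subgroup `G(n-1)` of `G n`: the coordinates `r_n` and `r_{jn}` vanish. -/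
def Gsub (n : ℕ) : Subgroup (G n) where
  carrier := {r | (∀ i : Fin n, (i : ℕ) + 1 = n → r.u i = 0) ∧
                  ∀ p : PairIdx n, (p.1.2 : ℕ) + 1 = n → r.v p = 0}
  one_mem' := ⟨fun _ _ => rfl, fun _ _ => rfl⟩
  mul_mem' := by
    rintro r s ⟨hr1, hr2⟩ ⟨hs1, hs2⟩
    refine ⟨fun i hi => ?_, fun p hp => ?_⟩
    · simp [hr1 i hi, hs1 i hi]
    · simp [hr2 p hp, hs2 p hp, hs1 p.1.2 hp]
  inv_mem' := by
    rintro r ⟨hr1, hr2⟩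
    refine ⟨fun i hi => ?_, fun p hp => ?_⟩
    · simp [hr1 i hi]
    · simp [hr2 p hp, hr1 p.1.2 hp]

lemma mem_Hsub_iff {n : ℕ} {r : G n} :
    r ∈ Hsub n ↔ (∀ i : Fin n, (i : ℕ) + 1 < n → r.u i = 0) ∧
      ∀ p : PairIdx n, (p.1.2 : ℕ) + 1 < n → r.v p = 0 := Iff.rfl

lemma mem_Gsub_iff {n : ℕ} {r : G n} :
    r ∈ Gsub n ↔ (∀ i : Fin n, (i : ℕ) + 1 = n → r.u i = 0) ∧
      ∀ p : PairIdx n, (p.1.2 : ℕ) + 1 = n → r.v p = 0 := Iff.rfl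

/-- `H(n)` is a normal subgroup; conjugation preserves it. -/
lemma conj_mem_Hsub {n : ℕ} (s : G n) {a : G n} (ha : a ∈ Hsub n) :
    s * a * s⁻¹ ∈ Hsub n := by
  obtain ⟨ha1, ha2⟩ := ha
  refine ⟨fun i hi => ?_, fun p hp => ?_⟩
  · simp [ha1 i hi]
  · have hj : (p.1.1 : ℕ) + 1 < n := by
      have h2 : (p.1.1 : ℕ) < (p.1.2 : ℕ) := p.2
      omega
    simp [ha2 p hp, ha1 p.1.2 hp, ha1 p.1.1 hj]

/-- The action `α_b(a) = b a b⁻¹` of `G(n-1)` on `H(n)`. -/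
def conjH {n : ℕ} (b : Gsub n) (a : Hsub n) : Hsub n :=
  ⟨(b : G n) * (a : G n) * (b : G n)⁻¹, conj_mem_Hsub _ a.2⟩

/-- The `H(n)`-part of the unique factorization `r = a·b`, `a ∈ H(n)`, `b ∈ G(n-1)`. -/
def hpart {n : ℕ} (r : G n) : Hsub n :=
  ⟨⟨fun i => if (i : ℕ) + 1 = n then r.u i else 0,
    fun p => if (p.1.2 : ℕ) + 1 = n then r.v p else 0⟩, by
    refine ⟨fun i hi => ?_, fun p hp => ?_⟩
    · exact if_neg (by omega)
    · exact if_neg (by omega)⟩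

/-- The `G(n-1)`-part of the unique factorization `r = a·b`. -/
def gpart {n : ℕ} (r : G n) : Gsub n :=
  ⟨⟨fun i => if (i : ℕ) + 1 = n then 0 else r.u i,
    fun p => if (p.1.2 : ℕ) + 1 = n then 0 else r.v p⟩, by
    refine ⟨fun i hi => ?_, fun p hp => ?_⟩
    · exact if_pos hi
    · exact if_pos hp⟩

/-- `r` indeed factors as `hpart r * gpart r`. -/
lemma hpart_mul_gpart {n : ℕ} (r : G n) : ((hpart r : G n)) * (gpart r : G n) = r := by
  refine G.ext ?_ ?_ <;> funext x
  · show (if ((x : ℕ)) + 1 = n then r.u x else 0) + (if (x : ℕ) + 1 = n then 0 else r.u x) = r.u x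
    split <;> ring
  · show (if ((x.1.2 : ℕ)) + 1 = n then r.v x else 0) +
      (if (x.1.2 : ℕ) + 1 = n then 0 else r.v x) +
      (if ((x.1.1 : ℕ)) + 1 = n then r.u x.1.1 else 0) *
        (if (x.1.2 : ℕ) + 1 = n then 0 else r.u x.1.2) = r.v x
    have h2 : (x.1.1 : ℕ) < (x.1.2 : ℕ) := x.2
    have h3 : (x.1.2 : ℕ) < n := x.1.2.isLt
    rcases eq_or_ne ((x.1.2 : ℕ) + 1) n with h | h
    · rw [if_pos h, if_pos h, if_pos h, if_neg (by omega)]; ring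
    · rw [if_neg h, if_neg h, if_neg h, if_neg (show ¬((x.1.1 : ℕ) + 1 = n) by omega)]
      ring

/-- An admissible pair `(σ_H, g)` (Mackey data with trivial multiplier on `G(n-1)`). -/
structure AdmissiblePair (n : ℕ) (σH : Hsub n → Hsub n → Circle)
    (g : Hsub n → Gsub n → Circle) : Prop where
  multH : IsMultiplier σH
  g_one_right : ∀ a : Hsub n, g a 1 = 1
  g_one_left : ∀ b : Gsub n, g 1 b = 1
  g_add : ∀ (a a' : Hsub n) (b : Gsub n),
    g (a * a') b = σH (conjH b a) (conjH b a') * (σH a a')⁻¹ * (g a b * g a' b)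
  g_mul : ∀ (a : Hsub n) (b b' : Gsub n), g a (b * b') = g (conjH b' a) b * g a b'

/-- An admissible triple `(σ_H, g, σ')`. -/
def AdmissibleTriple (n : ℕ) (σH : Hsub n → Hsub n → Circle)
    (g : Hsub n → Gsub n → Circle) (σ' : Gsub n → Gsub n → Circle) : Prop :=
  AdmissiblePair n σH g ∧ IsMultiplier σ'

/-- The map `σ_n(a′b, ab′) = σ_H(a′, α_b(a)) g(a,b) σ′(b,b′)` defined via the unique
factorizations. -/
noncomputable def sigmaN {n : ℕ} (σH : Hsub n → Hsub n → Circle) (g : Hsub n → Gsub n → Circle)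
    (σ' : Gsub n → Gsub n → Circle) (r s : G n) : Circle :=
  σH (hpart r) (conjH (gpart r) (hpart s)) * g (hpart s) (gpart r) *
    σ' (gpart r) (gpart s)

/-- The map `τ(a′b, ab′) = σ_H(a′, α_b(a)) g(a,b)` defined via the unique factorizations. -/
noncomputable def tauN {n : ℕ} (σH : Hsub n → Hsub n → Circle) (g : Hsub n → Gsub n → Circle)
    (r s : G n) : Circle :=
  σH (hpart r) (conjH (gpart r) (hpart s)) * g (hpart s) (gpart r)

/-- The generator `u_i`. -/
def uE {n : ℕ} (i : Fin n) : G n := ⟨fun j => if j = i then 1 else 0, fun _ => 0⟩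

/-- The generator `v_{jk}`. -/
def vE {n : ℕ} (j k : Fin n) : G n := ⟨fun _ => 0, fun p => if p.1 = (j, k) then 1 else 0⟩

/-- The last index `n` (i.e. `n-1` in `Fin n`). -/
def lastI (n : ℕ) (hn : 0 < n) : Fin n := ⟨n - 1, by omega⟩

/-- `u_n` as an element of `H(n)`. -/
def unH {n : ℕ} (hn : 0 < n) : Hsub n :=
  ⟨uE (lastI n hn), by
    refine ⟨fun i hi => ?_, fun p hp => rfl⟩
    have h : i ≠ lastI n hn := by
      intro h; apply absurd hi; rw [h]; show ¬ (n - 1) + 1 < n; omega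
    simp [uE, h]⟩

/-- `u_i` (for `i < n`) as an element of `G(n-1)`. -/
def uiG {n : ℕ} (i : Fin n) (hi : (i : ℕ) + 1 < n) : Gsub n :=
  ⟨uE i, by
    refine ⟨fun j hj => ?_, fun p hp => rfl⟩
    have h : j ≠ i := by intro h; rw [h] at hj; omega
    simp [uE, h]⟩

/-- `v_{in}` (for `i < n`) as an element of `H(n)`. -/
def vinH {n : ℕ} (i : Fin n) (hi : (i : ℕ) + 1 < n) : Hsub n :=
  ⟨vE i (lastI n (by omega)), by
    refine ⟨fun j hj => rfl, fun p hp => ?_⟩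
    have h : p.1 ≠ (i, lastI n (by omega)) := by
      intro h
      have h2 : (p.1.2 : ℕ) = n - 1 := by rw [h]; rfl
      omega
    simp [vE, h]⟩

/-- `v_{ij}` (for `j < n`) as an element of `G(n-1)`. -/
def vijG {n : ℕ} (i j : Fin n) (hj : (j : ℕ) + 1 < n) : Gsub n :=
  ⟨vE i j, by
    refine ⟨fun k hk => rfl, fun p hp => ?_⟩
    have h : p.1 ≠ (i, j) := by
      intro h
      have h2 : (p.1.2 : ℕ) = (j : ℕ) := by rw [h]
      omega
    simp [vE, h]⟩

/-- The "word part" `w(a)` of `a ∈ H(n)`. -/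
def wH {n : ℕ} (a : Hsub n) : Hsub n :=
  ⟨⟨(a : G n).u, fun _ => 0⟩,
    ⟨fun i hi => (mem_Hsub_iff.mp a.2).1 i hi, fun _ _ => rfl⟩⟩

/-- The "central part" `z(a)` of `a ∈ H(n)`. -/
def zH {n : ℕ} (a : Hsub n) : Hsub n :=
  ⟨⟨fun _ => 0, (a : G n).v⟩,
    ⟨fun _ _ => rfl, fun p hp => (mem_Hsub_iff.mp a.2).2 p hp⟩⟩

/-- The "word part" `w(b)` of `b ∈ G(n-1)`. -/
def wG {n : ℕ} (b : Gsub n) : Gsub n :=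
  ⟨⟨(b : G n).u, fun _ => 0⟩,
    ⟨fun i hi => (mem_Gsub_iff.mp b.2).1 i hi, fun _ _ => rfl⟩⟩

/-- The "central part" `z(b)` of `b ∈ G(n-1)`. -/
def zG {n : ℕ} (b : Gsub n) : Gsub n :=
  ⟨⟨fun _ => 0, (b : G n).v⟩,
    ⟨fun _ _ => rfl, fun p hp => (mem_Gsub_iff.mp b.2).2 p hp⟩⟩

/-- `g(v_{in}, u_j)`, as a total function (equal to `1` outside the admissible range). -/
noncomputable def gvu {n : ℕ} (g : Hsub n → Gsub n → Circle) (i j : Fin n) : Circle :=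
  if h : (i : ℕ) + 1 < n ∧ (j : ℕ) + 1 < n then g (vinH i h.1) (uiG j h.2) else 1

/-- `g(u_n, v_{ij})`, as a total function (equal to `1` outside the admissible range). -/
noncomputable def guv {n : ℕ} (g : Hsub n → Gsub n → Circle) (i j : Fin n) : Circle :=
  if h : (j : ℕ) + 1 < n then g (unH (by omega)) (vijG i j h) else 1

/-- A normalized pair `(σ_H, g)`: admissible, with `σ_H` of the standard `λ`-form, and
`g(u_n, u_i) = 1` for all `1 ≤ i ≤ n-1`. -/
def Normalized {n : ℕ} (hn : 0 < n) (σH : Hsub n → Hsub n → Circle)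
    (g : Hsub n → Gsub n → Circle) (lam : Fin n → Circle) : Prop :=
  AdmissiblePair n σH g ∧
  (∀ a' a : Hsub n, σH a' a =
    ∏ i ∈ Finset.univ.filter (fun i : Fin n => (i : ℕ) + 1 < n),
      lam i ^ (uc (a' : G n) (lastI n hn) * vc (a : G n) i (lastI n hn))) ∧
  ∀ (i : Fin n) (hi : (i : ℕ) + 1 < n), g (unH hn) (uiG i hi) = 1

/-- The multiplier `σ_λ` of `G n` attached to a family of parameters
`λ_{i,jk} ∈ 𝕋` (`1 ≤ i ≤ k`, `1 ≤ j < k ≤ n`). -/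
noncomputable def sigmaLam {n : ℕ} (lam : Fin n → Fin n → Fin n → Circle) (r s : G n) : Circle :=
  (∏ t ∈ Finset.univ.filter
      (fun t : Fin n × Fin n × Fin n => t.1 < t.2.1 ∧ t.2.1 < t.2.2),
    lam t.1 t.2.1 t.2.2 ^ (vc s t.2.1 t.2.2 * uc r t.1 + uc s t.2.2 * vc r t.1 t.2.1) *
    lam t.2.1 t.1 t.2.2 ^ (vc s t.1 t.2.2 * uc r t.2.1 +
      uc s t.2.2 * (uc r t.1 * uc r t.2.1 - vc r t.1 t.2.1))) *
  ∏ p ∈ Finset.univ.filter (fun p : Fin n × Fin n => p.1 < p.2),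
    lam p.1 p.1 p.2 ^ (vc s p.1 p.2 * uc r p.1 +
      uc s p.2 * (uc r p.1 * (uc r p.1 - 1) / 2)) *
    lam p.2 p.1 p.2 ^ (uc r p.2 * (vc s p.1 p.2 + uc r p.1 * uc s p.2) +
      uc r p.1 * (uc s p.2 * (uc s p.2 - 1) / 2))

/-- The extension of the parameter family to indices `i > k`, via
`λ_{k,ij} = λ_{i,jk}⁻¹ λ_{j,ik}` for `i < j < k`. -/
noncomputable def lamExt {n : ℕ} (lam : Fin n → Fin n → Fin n → Circle) (i j k : Fin n) : Circle :=
  if i ≤ k then lam i j k else (lam j k i)⁻¹ * lam k j i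

/-!
Write `a ∈ H(n)` as `u_n^{a_n} z` with `z` central. The `σ_H`-correction in the additivity of `g`
is `∏ λ_i^{a_n a'_n b_i}`, so it vanishes as soon as one factor has `a_n = 0`; since `z` is fixed by
the action, `g(z, ·)` is a homomorphism `G(n-1) → 𝕋`, and `g(z, b) = ∏ λ_{i,jn}^{z_{jn} b_i}`
because a homomorphism from `G(n)` to an abelian group kills `v_{jk} = [u_j, u_k]` and is therefore
determined by its values on the `u_i`. The cocycle identity gives
`g(u_n, bb') = g(u_n, b) g(u_n, b') g(α_{b'}(u_n) u_n⁻¹, b)`, the same twisted multiplicativity as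
the explicit quadratic expression `∏ λ_{i,jn}^{q_{ji}(b)}`; both are trivial on the `u_i`, hence
equal. Finally `m ↦ g(u_n^m, b)` satisfies a first-order recursion whose solution carries the
binomial exponent `m(m-1)/2`.
-/

open Finset

lemma prod_zpow_single_of_map_add {ι A : Type*} [Fintype ι] [DecidableEq ι] [CommGroup A]
    {f : (ι → ℤ) → A} (hf : ∀ x y, f (x + y) = f x * f y) (c : ι → ℤ) :
    f c = ∏ i, f (Pi.single i 1) ^ c i := by
  let F : (ι → ℤ) →+ Additive A := AddMonoidHom.mk' (fun x => Additive.ofMul (f x)) hf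
  calc f c = Additive.toMul (F (∑ i, c i • Pi.single i 1)) := by
        simp only [← Pi.single_smul, smul_eq_mul, mul_one, univ_sum_single]; rfl
    _ = ∏ i, f (Pi.single i 1) ^ c i := by
        simp only [map_sum, map_zsmul, toMul_sum, toMul_zsmul]; rfl

lemma succ_mul_ediv_two (m : ℤ) : (m + 1) * (m + 1 - 1) / 2 = m * (m - 1) / 2 + m := by
  rw [show (m + 1) * (m + 1 - 1) = m * (m - 1) + m * 2 by ring,
    Int.add_mul_ediv_right _ _ two_ne_zero]

lemma add_mul_add_sub_one_ediv_two (x y : ℤ) :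
    (x + y) * (x + y - 1) / 2 = x * (x - 1) / 2 + y * (y - 1) / 2 + y * x := by
  rw [show (x + y) * (x + y - 1) = x * (x - 1) + (y * (y - 1) + y * x * 2) by ring,
    Int.add_ediv_of_dvd_right ((Int.even_mul_pred_self y).two_dvd.add (dvd_mul_left 2 _)),
    Int.add_mul_ediv_right _ _ two_ne_zero, add_assoc]

lemma eq_zpow_mul_zpow_of_succ {A : Type*} [CommGroup A] {f : ℤ → A} {x y : A}
    (h0 : f 0 = 1) (hs : ∀ m, f (m + 1) = f m * x * y ^ m) (m : ℤ) :
    f m = x ^ m * y ^ (m * (m - 1) / 2) := by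
  set e : ℤ → A := fun m => f m / (x ^ m * y ^ (m * (m - 1) / 2))
  have he : ∀ m, e (m + 1) = e m := fun m => by
    simp only [e, hs, succ_mul_ediv_two, zpow_add, zpow_one]
    rw [mul_assoc (f m), mul_mul_mul_comm (x ^ m), mul_div_mul_right_eq_div]
  have : e m = 1 := by
    induction m using Int.induction_on with
    | zero => simp [e, h0]
    | succ k ih => rw [he, ih]
    | pred k ih => rw [← ih, ← he, sub_add_cancel]
  exact div_eq_one.mp this

lemma prod_prod_eq_prod_lt_mul_prod_diag {ι M : Type*} [LinearOrder ι] [CommMonoid M]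
    (s : Finset ι) (F : ι → ι → M) :
    ∏ j ∈ s, ∏ i ∈ s, F j i =
      (∏ p ∈ (s ×ˢ s).filter (fun p => p.1 < p.2), F p.2 p.1 * F p.1 p.2) * ∏ j ∈ s, F j j := by
  have hswap : ∏ p ∈ (s ×ˢ s).filter (fun p => p.2 < p.1), F p.1 p.2 =
      ∏ p ∈ (s ×ˢ s).filter (fun p => p.1 < p.2), F p.2 p.1 :=
    prod_nbij' Prod.swap Prod.swap (by simp +contextual) (by simp +contextual)
      (fun _ _ => rfl) (fun _ _ => rfl) (fun _ _ => rfl)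
  have hlt : (s ×ˢ s).filter (fun p => ¬ p.2 < p.1 ∧ p.1 < p.2) =
      (s ×ˢ s).filter (fun p => p.1 < p.2) :=
    filter_congr fun p _ => and_iff_right_of_imp fun h => not_lt.2 h.le
  have hdiag : (s ×ˢ s).filter (fun p => ¬ p.2 < p.1 ∧ ¬ p.1 < p.2) = s.diag := by
    ext p
    simp only [mem_filter, mem_product, mem_diag, not_lt]
    exact ⟨fun h => ⟨h.1.1, le_antisymm h.2.1 h.2.2⟩,
      fun h => ⟨⟨h.1, h.2 ▸ h.1⟩, h.2.le, h.2.ge⟩⟩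
  rw [← prod_product', ← prod_filter_mul_prod_filter_not (s ×ˢ s) (fun p => p.2 < p.1),
    ← prod_filter_mul_prod_filter_not ((s ×ˢ s).filter fun p => ¬ p.2 < p.1)
      (fun p => p.1 < p.2), filter_filter, filter_filter, hlt, hdiag, prod_diag, hswap,
    ← mul_assoc, ← prod_mul_distrib]

namespace G

variable {n : ℕ}

lemma eq_mk_u_mul_mk_v (r : G n) : r = ⟨r.u, 0⟩ * ⟨0, r.v⟩ := by
  ext <;> simp

lemma mk_v_mul_mk_v (c c' : PairIdx n → ℤ) : (⟨0, c⟩ : G n) * ⟨0, c'⟩ = ⟨0, c + c'⟩ := by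
  ext <;> simp

lemma mk_u_mul_mk_u (m m' : Fin n → ℤ) :
    (⟨m, 0⟩ : G n) * ⟨m', 0⟩ = ⟨m + m', 0⟩ * ⟨0, fun p => m p.1.1 * m' p.1.2⟩ := by
  ext <;> simp

lemma uE_eq_mk (i : Fin n) : uE i = ⟨Pi.single i 1, 0⟩ := by
  ext j <;> simp [uE, Pi.single_apply]

lemma uE_mul_uE (p : PairIdx n) :
    uE p.1.1 * uE p.1.2 = ⟨0, Pi.single p 1⟩ * (uE p.1.2 * uE p.1.1) := by
  have hp := p.2
  ext q
  · simp [uE]; ring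
  · have hq := q.2
    simp only [uE, mul_v, Pi.single_apply, Subtype.ext_iff, Prod.ext_iff]
    split_ifs <;> first | omega | simp_all

end G

lemma map_eq_prod_map_uE_zpow {n : ℕ} {A : Type*} [CommGroup A] (φ : G n →* A) (r : G n) :
    φ r = ∏ i, φ (uE i) ^ r.u i := by
  have hcomm (p : PairIdx n) : φ ⟨0, Pi.single p 1⟩ = 1 := by
    have h := congrArg φ (G.uE_mul_uE p)
    rwa [map_mul, map_mul, map_mul, mul_comm (φ (uE p.1.2)), right_eq_mul] at h
  have hcen (c : PairIdx n → ℤ) : φ ⟨0, c⟩ = 1 := by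
    rw [prod_zpow_single_of_map_add (f := fun c => φ ⟨0, c⟩)
      (fun c c' => by rw [← map_mul, G.mk_v_mul_mk_v]) c]
    simp [hcomm]
  have hu (m m' : Fin n → ℤ) : φ ⟨m + m', 0⟩ = φ ⟨m, 0⟩ * φ ⟨m', 0⟩ := by
    rw [← map_mul, G.mk_u_mul_mk_u, map_mul, hcen, mul_one]
  conv_lhs => rw [G.eq_mk_u_mul_mk_v r, map_mul, hcen, mul_one,
    prod_zpow_single_of_map_add (f := fun m => φ ⟨m, 0⟩) hu]
  simp only [G.uE_eq_mk]

lemma vc_mul {n : ℕ} (r s : G n) {i j : Fin n} (h : i < j) :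
    vc (r * s) i j = vc r i j + vc s i j + uc r i * uc s j := by
  simp [vc, uc, h]

/-- The exponent of `λ_{i,jn}` in `g(u_n, r)`. -/
def quadCoord {n : ℕ} (r : G n) (j i : Fin n) : ℤ :=
  if i < j then vc r i j
  else if j < i then uc r j * uc r i - vc r j i
  else uc r j * (uc r j - 1) / 2

section QuadCoord

variable {n : ℕ} (r : G n) {i j : Fin n}

lemma quadCoord_of_lt (h : i < j) : quadCoord r j i = vc r i j := if_pos h

lemma quadCoord_of_gt (h : j < i) : quadCoord r j i = uc r j * uc r i - vc r j i := by
  rw [quadCoord, if_neg h.not_gt, if_pos h]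

lemma quadCoord_self : quadCoord r j j = uc r j * (uc r j - 1) / 2 := by
  simp [quadCoord]

lemma quadCoord_mul (s : G n) (j i : Fin n) :
    quadCoord (r * s) j i = quadCoord r j i + quadCoord s j i + uc s j * uc r i := by
  rcases lt_trichotomy i j with h | rfl | h
  · simp only [quadCoord_of_lt _ h, vc_mul _ _ h]; ring
  · simp only [quadCoord_self, uc, G.mul_u]
    exact add_mul_add_sub_one_ediv_two _ _
  · simp only [quadCoord_of_gt _ h, vc_mul _ _ h, uc, G.mul_u]; ring

end QuadCoord

section Factorization

variable {n : ℕ}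

lemma gpart_mul (r s : G n) : gpart (r * s) = gpart r * gpart s := by
  refine Subtype.ext (G.ext (funext fun i => ?_) (funext fun p => ?_))
  · show (if (i : ℕ) + 1 = n then 0 else r.u i + s.u i) =
      (if (i : ℕ) + 1 = n then 0 else r.u i) + (if (i : ℕ) + 1 = n then 0 else s.u i)
    split_ifs <;> simp
  · have hp : (p.1.1 : ℕ) < p.1.2 := p.2
    show (if (p.1.2 : ℕ) + 1 = n then 0 else r.v p + s.v p + r.u p.1.1 * s.u p.1.2) =
      (if (p.1.2 : ℕ) + 1 = n then 0 else r.v p) + (if (p.1.2 : ℕ) + 1 = n then 0 else s.v p) +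
        (if (p.1.1 : ℕ) + 1 = n then 0 else r.u p.1.1) *
          (if (p.1.2 : ℕ) + 1 = n then 0 else s.u p.1.2)
    split_ifs <;> omega

def gpartHom (n : ℕ) : G n →* Gsub n := MonoidHom.mk' gpart gpart_mul

lemma gpart_coe_of_Gsub (b : Gsub n) : gpart (b : G n) = b := by
  refine Subtype.ext (G.ext (funext fun i => ?_) (funext fun p => ?_))
  · show (if (i : ℕ) + 1 = n then 0 else _) = _
    split_ifs with h
    exacts [(b.2.1 i h).symm, rfl]
  · show (if (p.1.2 : ℕ) + 1 = n then 0 else _) = _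
    split_ifs with h
    exacts [(b.2.2 p h).symm, rfl]

lemma gpart_coe_of_Hsub (a : Hsub n) : gpart (a : G n) = 1 := by
  refine Subtype.ext (G.ext (funext fun i => ?_) (funext fun p => ?_))
  · show (if (i : ℕ) + 1 = n then 0 else _) = 0
    split_ifs with h
    exacts [rfl, a.2.1 i (by omega)]
  · show (if (p.1.2 : ℕ) + 1 = n then 0 else _) = 0
    split_ifs with h
    exacts [rfl, a.2.2 p (by omega)]

lemma gpart_coe_mul (a : Hsub n) (b : Gsub n) : gpart ((a : G n) * (b : G n)) = b := by
  rw [gpart_mul, gpart_coe_of_Hsub, gpart_coe_of_Gsub, one_mul]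

lemma hpart_coe_mul (a : Hsub n) (b : Gsub n) : hpart ((a : G n) * (b : G n)) = a := by
  have h := hpart_mul_gpart ((a : G n) * (b : G n))
  rw [gpart_coe_mul] at h
  exact Subtype.ext (mul_right_cancel h)

lemma tauN_coe_mul (σH : Hsub n → Hsub n → Circle) (g : Hsub n → Gsub n → Circle)
    (a a' : Hsub n) (b b' : Gsub n) :
    tauN σH g ((a' : G n) * (b : G n)) ((a : G n) * (b' : G n)) = σH a' (conjH b a) * g a b := by
  rw [tauN, hpart_coe_mul, hpart_coe_mul, gpart_coe_mul]

/-- The image of `u_i` in `G(n-1)` (trivial for `i = n`). -/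
def uG (i : Fin n) : Gsub n := gpart (uE i)

lemma uG_eq_uiG {i : Fin n} (hi : (i : ℕ) + 1 < n) : uG i = uiG i hi :=
  gpart_coe_of_Gsub (uiG i hi)

lemma uG_of_not_lt {i : Fin n} (hi : ¬ (i : ℕ) + 1 < n) : uG i = 1 := by
  refine Subtype.ext (G.ext (funext fun j => ?_) (funext fun p => ite_self 0))
  show (if (j : ℕ) + 1 = n then 0 else if j = i then 1 else 0) = 0
  split_ifs with h1 h2
  exacts [rfl, absurd (h2 ▸ j.isLt) (by omega), rfl]

lemma quadCoord_uG (k j i : Fin n) : quadCoord (uG k : G n) j i = 0 := by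
  by_cases hk : (k : ℕ) + 1 < n
  · rw [uG_eq_uiG hk]
    show quadCoord (uE k) j i = 0
    unfold quadCoord
    split_ifs <;> simp_all [uc, vc, uE]
    rintro rfl rfl
    exact lt_irrefl _ ‹_›
  · rw [uG_of_not_lt hk]
    simp [quadCoord, uc, vc]

lemma map_eq_prod_map_uG_zpow {A : Type*} [CommGroup A] (φ : Gsub n →* A) (b : Gsub n) :
    φ b = ∏ i, φ (uG i) ^ uc (b : G n) i := by
  have h := map_eq_prod_map_uE_zpow (φ.comp (gpartHom n)) b
  simp only [MonoidHom.comp_apply, gpartHom, MonoidHom.mk'_apply, gpart_coe_of_Gsub] at h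
  exact h

end Factorization

/-- The element of `H(n)` with `a_n = m` and `a_{jn} = c_j` (the value `c_n` is ignored). -/
def hOf {n : ℕ} (m : ℤ) (c : Fin n → ℤ) : Hsub n :=
  ⟨⟨fun i => if (i : ℕ) + 1 = n then m else 0,
    fun p => if (p.1.2 : ℕ) + 1 = n then c p.1.1 else 0⟩,
    fun _ _ => if_neg (by omega), fun _ _ => if_neg (by omega)⟩

section HCoords

variable {n : ℕ}

lemma hOf_mul (m m' : ℤ) (c c' : Fin n → ℤ) : hOf m c * hOf m' c' = hOf (m + m') (c + c') := by
  refine Subtype.ext (G.ext (funext fun i => ?_) (funext fun p => ?_))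
  · show (if (i : ℕ) + 1 = n then m else 0) + (if (i : ℕ) + 1 = n then m' else 0) =
      if (i : ℕ) + 1 = n then m + m' else 0
    split_ifs <;> simp
  · have hp : (p.1.1 : ℕ) < p.1.2 := p.2
    show (if (p.1.2 : ℕ) + 1 = n then c p.1.1 else 0) +
        (if (p.1.2 : ℕ) + 1 = n then c' p.1.1 else 0) +
        (if (p.1.1 : ℕ) + 1 = n then m else 0) * (if (p.1.2 : ℕ) + 1 = n then m' else 0) =
      if (p.1.2 : ℕ) + 1 = n then c p.1.1 + c' p.1.1 else 0
    split_ifs <;> omega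

lemma hOf_zero_zero : hOf 0 (0 : Fin n → ℤ) = 1 :=
  Subtype.ext (G.ext (funext fun _ => ite_self 0) (funext fun _ => ite_self 0))

lemma eq_hOf (h0 : 0 < n) (a : Hsub n) :
    a = hOf (uc (a : G n) (lastI n h0)) (fun j => vc (a : G n) j (lastI n h0)) := by
  refine Subtype.ext (G.ext (funext fun i => ?_) (funext fun p => ?_))
  · show (a : G n).u i = if (i : ℕ) + 1 = n then (a : G n).u (lastI n h0) else 0
    split_ifs with h
    · rw [show i = lastI n h0 from Fin.ext (by simp [lastI]; omega)]
    · exact a.2.1 i (by omega)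
  · have hp : (p.1.1 : ℕ) < p.1.2 := p.2
    show (a : G n).v p = if (p.1.2 : ℕ) + 1 = n then vc (a : G n) p.1.1 (lastI n h0) else 0
    split_ifs with h
    · have hL : p.1.2 = lastI n h0 := Fin.ext (by simp [lastI]; omega)
      rw [vc, dif_pos (hL ▸ p.2)]
      exact congrArg _ (Subtype.ext (Prod.ext rfl hL))
    · exact a.2.2 p (by omega)

lemma conjH_hOf (b : Gsub n) (m : ℤ) (c : Fin n → ℤ) :
    conjH b (hOf m c) = hOf m (fun j => c j + uc (b : G n) j * m) := by
  refine Subtype.ext (G.ext (funext fun i => ?_) (funext fun p => ?_))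
  · simp [conjH, hOf]
  · have hp : (p.1.1 : ℕ) < p.1.2 := p.2
    have hb := b.2.1 p.1.2
    simp only [conjH, hOf, G.mul_v, G.mul_u, G.inv_v, G.inv_u, uc]
    split_ifs <;> simp_all <;> omega

lemma uc_hOf (h0 : 0 < n) (m : ℤ) (c : Fin n → ℤ) :
    uc (hOf m c : G n) (lastI n h0) = m :=
  if_pos (by simp [lastI]; omega)

lemma vc_hOf (h0 : 0 < n) (m : ℤ) (c : Fin n → ℤ) {j : Fin n} (hj : (j : ℕ) + 1 < n) :
    vc (hOf m c : G n) j (lastI n h0) = c j := by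
  rw [vc, dif_pos (show j < lastI n h0 by simp [Fin.lt_def, lastI]; omega)]
  exact if_pos (by simp [lastI]; omega)

lemma unH_eq_hOf (h0 : 0 < n) : unH h0 = hOf 1 0 := by
  refine Subtype.ext (G.ext (funext fun i => ?_) (funext fun _ => (ite_self 0).symm))
  show (if i = lastI n h0 then 1 else 0) = if (i : ℕ) + 1 = n then 1 else 0
  simp only [Fin.ext_iff, lastI]
  split_ifs <;> omega

lemma vinH_eq_hOf {j : Fin n} (hj : (j : ℕ) + 1 < n) : vinH j hj = hOf 0 (Pi.single j 1) := by
  refine Subtype.ext (G.ext (funext fun _ => (ite_self 0).symm) (funext fun p => ?_))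
  show (if p.1 = (j, lastI n _) then 1 else 0) =
    if (p.1.2 : ℕ) + 1 = n then (Pi.single j 1 : Fin n → ℤ) p.1.1 else 0
  simp only [Prod.ext_iff, Fin.ext_iff, lastI, Pi.single_apply]
  split_ifs <;> omega

lemma hOf_zero_single_of_not_lt {j : Fin n} (hj : ¬ (j : ℕ) + 1 < n) :
    hOf 0 (Pi.single j 1) = 1 := by
  refine Subtype.ext (G.ext (funext fun _ => ite_self 0) (funext fun p => ?_))
  have hp : (p.1.1 : ℕ) < p.1.2 := p.2
  show (if (p.1.2 : ℕ) + 1 = n then (Pi.single j 1 : Fin n → ℤ) p.1.1 else 0) = 0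
  simp only [Pi.single_apply, Fin.ext_iff]
  split_ifs <;> omega

end HCoords

section Cocycle

variable {n : ℕ} {h0 : 0 < n} {σH : Hsub n → Hsub n → Circle} {g : Hsub n → Gsub n → Circle}
  {lam : Fin n → Circle}

lemma gvu_eq_g_hOf (hpair : AdmissiblePair n σH g) (j i : Fin n) :
    gvu g j i = g (hOf 0 (Pi.single j 1)) (uG i) := by
  unfold gvu
  split_ifs with h
  · rw [vinH_eq_hOf, uG_eq_uiG h.2]
  · rcases not_and_or.1 h with hj | hi
    · rw [hOf_zero_single_of_not_lt hj, hpair.g_one_left]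
    · rw [uG_of_not_lt hi, hpair.g_one_right]

lemma sigmaH_hOf_right (hnorm : Normalized h0 σH g lam) (a' : Hsub n) (m : ℤ) (c : Fin n → ℤ) :
    σH a' (hOf m c) = ∏ i ∈ univ.filter (fun i : Fin n => (i : ℕ) + 1 < n),
      lam i ^ (uc (a' : G n) (lastI n h0) * c i) := by
  rw [hnorm.2.1]
  exact prod_congr rfl fun i hi => by rw [vc_hOf h0 m c (mem_filter.1 hi).2]

lemma g_hOf_mul (hnorm : Normalized h0 σH g lam) (m m' : ℤ) (c c' : Fin n → ℤ) (b : Gsub n) :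
    g (hOf m c * hOf m' c') b =
      (∏ i ∈ univ.filter (fun i : Fin n => (i : ℕ) + 1 < n), lam i ^ (m * m' * uc (b : G n) i)) *
        (g (hOf m c) b * g (hOf m' c') b) := by
  rw [hnorm.1.g_add, conjH_hOf, conjH_hOf, sigmaH_hOf_right hnorm, sigmaH_hOf_right hnorm,
    uc_hOf, uc_hOf, ← prod_inv_distrib, ← prod_mul_distrib]
  congr 1
  refine prod_congr rfl fun i _ => ?_
  rw [← zpow_neg, ← zpow_add]
  ring_nf

lemma g_hOf_zero_left_mul (hnorm : Normalized h0 σH g lam) (c : Fin n → ℤ) (m' : ℤ)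
    (c' : Fin n → ℤ) (b : Gsub n) :
    g (hOf 0 c * hOf m' c') b = g (hOf 0 c) b * g (hOf m' c') b := by
  simp [g_hOf_mul hnorm]

lemma g_hOf_zero_left_apply_mul (hpair : AdmissiblePair n σH g) (c : Fin n → ℤ)
    (b b' : Gsub n) :
    g (hOf 0 c) (b * b') = g (hOf 0 c) b * g (hOf 0 c) b' := by
  rw [hpair.g_mul, conjH_hOf]
  simp only [mul_zero, add_zero]

lemma g_hOf_zero_left (hnorm : Normalized h0 σH g lam) (c : Fin n → ℤ) (b : Gsub n) :
    g (hOf 0 c) b = ∏ j, ∏ i, gvu g j i ^ (c j * uc (b : G n) i) := by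
  have hc (i : Fin n) : g (hOf 0 c) (uG i) = ∏ j, gvu g j i ^ c j := by
    rw [prod_zpow_single_of_map_add (f := fun c => g (hOf 0 c) (uG i))
      (fun c c' => by rw [← g_hOf_zero_left_mul hnorm, hOf_mul, zero_add]) c]
    simp only [gvu_eq_g_hOf hnorm.1]
  rw [show g (hOf 0 c) b = _ from
    map_eq_prod_map_uG_zpow (MonoidHom.mk' _ (g_hOf_zero_left_apply_mul hnorm.1 c)) b, prod_comm]
  simp only [MonoidHom.mk'_apply, hc, ← prod_zpow, ← zpow_mul]

lemma g_hOf_one_zero_apply_uG (hnorm : Normalized h0 σH g lam) (i : Fin n) :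
    g (hOf 1 0) (uG i) = 1 := by
  by_cases hi : (i : ℕ) + 1 < n
  · rw [uG_eq_uiG hi, ← unH_eq_hOf h0]
    exact hnorm.2.2 i hi
  · rw [uG_of_not_lt hi, hnorm.1.g_one_right]

lemma g_hOf_one_zero_apply_mul (hnorm : Normalized h0 σH g lam) (b b' : Gsub n) :
    g (hOf 1 0) (b * b') = g (hOf 1 0) b * g (hOf 1 0) b' *
      ∏ j, ∏ i, gvu g j i ^ (uc (b' : G n) j * uc (b : G n) i) := by
  have h : conjH b' (hOf 1 0) = hOf 0 (fun j => uc (b' : G n) j) * hOf 1 0 := by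
    rw [conjH_hOf, hOf_mul]
    simp
  rw [hnorm.1.g_mul, h, g_hOf_zero_left_mul hnorm, g_hOf_zero_left hnorm]
  ac_rfl

lemma prod_zpow_quadCoord_mul {A : Type*} [CommGroup A] (x : Fin n → Fin n → A) (r s : G n) :
    ∏ j, ∏ i, x j i ^ quadCoord (r * s) j i =
      (∏ j, ∏ i, x j i ^ quadCoord r j i) * (∏ j, ∏ i, x j i ^ quadCoord s j i) *
        ∏ j, ∏ i, x j i ^ (uc s j * uc r i) := by
  simp only [quadCoord_mul, zpow_add, prod_mul_distrib]

lemma g_hOf_one_zero (hnorm : Normalized h0 σH g lam) (b : Gsub n) :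
    g (hOf 1 0) b = ∏ j, ∏ i, gvu g j i ^ quadCoord (b : G n) j i := by
  let φ : Gsub n →* Circle := MonoidHom.mk'
    (fun b => g (hOf 1 0) b / ∏ j, ∏ i, gvu g j i ^ quadCoord (b : G n) j i) fun b b' => by
      rw [g_hOf_one_zero_apply_mul hnorm, Subgroup.coe_mul, prod_zpow_quadCoord_mul,
        mul_div_mul_right_eq_div, div_mul_div_comm]
  have : φ b = 1 := by
    rw [map_eq_prod_map_uG_zpow φ b]
    exact prod_eq_one fun i _ => by simp [φ, g_hOf_one_zero_apply_uG hnorm, quadCoord_uG]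
  exact div_eq_one.1 this

lemma g_hOf_zero_right (hnorm : Normalized h0 σH g lam) (m : ℤ) (b : Gsub n) :
    g (hOf m 0) b = g (hOf 1 0) b ^ m *
      ∏ i ∈ univ.filter (fun i : Fin n => (i : ℕ) + 1 < n),
        lam i ^ (uc (b : G n) i * (m * (m - 1) / 2)) := by
  have hsucc (k : ℤ) : g (hOf (k + 1) 0) b = g (hOf k 0) b * g (hOf 1 0) b *
      (∏ i ∈ univ.filter (fun i : Fin n => (i : ℕ) + 1 < n), lam i ^ uc (b : G n) i) ^ k := by
    rw [show hOf (k + 1) 0 = hOf k 0 * hOf 1 0 by rw [hOf_mul, add_zero], g_hOf_mul hnorm,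
      mul_comm, ← prod_zpow]
    exact congrArg _ (prod_congr rfl fun i _ => by rw [← zpow_mul, mul_one, mul_comm])
  rw [eq_zpow_mul_zpow_of_succ (f := fun k => g (hOf k 0) b)
    (by simp [hOf_zero_zero, hnorm.1.g_one_left]) hsucc m, ← prod_zpow]
  simp only [← zpow_mul]

lemma g_hOf (hnorm : Normalized h0 σH g lam) (m : ℤ) (c : Fin n → ℤ) (b : Gsub n) :
    g (hOf m c) b =
      (∏ j, ∏ i, gvu g j i ^ (c j * uc (b : G n) i + m * quadCoord (b : G n) j i)) *
        ∏ i ∈ univ.filter (fun i : Fin n => (i : ℕ) + 1 < n),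
          lam i ^ (uc (b : G n) i * (m * (m - 1) / 2)) := by
  rw [show hOf m c = hOf 0 c * hOf m 0 by rw [hOf_mul, zero_add, add_zero],
    g_hOf_zero_left_mul hnorm, g_hOf_zero_left hnorm, g_hOf_zero_right hnorm,
    g_hOf_one_zero hnorm, ← mul_assoc]
  simp only [zpow_add, prod_mul_distrib, ← prod_zpow, ← zpow_mul, mul_comm m]

end Cocycle

lemma prod_prod_gvu_zpow {n : ℕ} (g : Hsub n → Gsub n → Circle) (e : Fin n → Fin n → ℤ) :
    ∏ j, ∏ i, gvu g j i ^ e j i =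
      (∏ p ∈ univ.filter (fun p : Fin n × Fin n => p.1 < p.2 ∧ (p.2 : ℕ) + 1 < n),
        gvu g p.2 p.1 ^ e p.2 p.1 * gvu g p.1 p.2 ^ e p.1 p.2) *
      ∏ j ∈ univ.filter (fun j : Fin n => (j : ℕ) + 1 < n), gvu g j j ^ e j j := by
  set s := univ.filter (fun j : Fin n => (j : ℕ) + 1 < n)
  have hvan (j i : Fin n) (h : j ∉ s ∨ i ∉ s) : gvu g j i ^ e j i = 1 := by
    simp only [s, mem_filter, mem_univ, true_and] at h
    rw [gvu, dif_neg (by tauto), one_zpow]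
  have hpairs : univ.filter (fun p : Fin n × Fin n => p.1 < p.2 ∧ (p.2 : ℕ) + 1 < n) =
      (s ×ˢ s).filter (fun p => p.1 < p.2) := by
    ext p
    simp only [s, mem_filter, mem_univ, true_and, mem_product, Fin.lt_def]
    omega
  rw [hpairs, ← prod_prod_eq_prod_lt_mul_prod_diag s (fun j i => gvu g j i ^ e j i),
    ← prod_subset (subset_univ s) fun j _ hj => prod_eq_one fun i _ => hvan j i (Or.inl hj)]
  exact prod_congr rfl fun j _ =>
    (prod_subset (subset_univ s) fun i _ hi => hvan j i (Or.inr hi)).symm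

/-- the explicit formula for the multiplier `τ` attached to a
normalized pair, where `λ_{i,jn} = g(v_{jn},u_i)` and `λ_{n,jn} = λ_j`. -/
theorem tauN_formula (n : ℕ) (hn : 2 ≤ n) (lam : Fin n → Circle)
    (σH : Hsub n → Hsub n → Circle) (g : Hsub n → Gsub n → Circle)
    (hnorm : Normalized (show 0 < n by omega) σH g lam) :
    ∀ (a a' : Hsub n) (b b' : Gsub n),
      tauN σH g ((a' : G n) * (b : G n)) ((a : G n) * (b' : G n)) =
        (∏ p ∈ Finset.univ.filter
            (fun p : Fin n × Fin n => p.1 < p.2 ∧ (p.2 : ℕ) + 1 < n),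
          gvu g p.2 p.1 ^ (vc (a : G n) p.2 (lastI n (by omega)) * uc (b : G n) p.1 +
            uc (a : G n) (lastI n (by omega)) * vc (b : G n) p.1 p.2) *
          gvu g p.1 p.2 ^ (vc (a : G n) p.1 (lastI n (by omega)) * uc (b : G n) p.2 +
            uc (a : G n) (lastI n (by omega)) *
              (uc (b : G n) p.1 * uc (b : G n) p.2 - vc (b : G n) p.1 p.2))) *
        (∏ j ∈ Finset.univ.filter (fun j : Fin n => (j : ℕ) + 1 < n),
          gvu g j j ^ (vc (a : G n) j (lastI n (by omega)) * uc (b : G n) j +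
            uc (a : G n) (lastI n (by omega)) *
              (uc (b : G n) j * (uc (b : G n) j - 1) / 2))) *
        ∏ j ∈ Finset.univ.filter (fun j : Fin n => (j : ℕ) + 1 < n),
          lam j ^ (uc (a' : G n) (lastI n (by omega)) *
              (vc (a : G n) j (lastI n (by omega)) +
                uc (b : G n) j * uc (a : G n) (lastI n (by omega))) +
            uc (b : G n) j * (uc (a : G n) (lastI n (by omega)) *
              (uc (a : G n) (lastI n (by omega)) - 1) / 2)) := by
  intro a a' b b'
  conv_lhs => rw [tauN_coe_mul, eq_hOf (show 0 < n by omega) a, conjH_hOf,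
    sigmaH_hOf_right hnorm, g_hOf hnorm, prod_prod_gvu_zpow]
  rw [mul_left_comm, ← prod_mul_distrib]
  congr 1
  · congr 1
    · refine prod_congr rfl fun p hp => ?_
      rw [quadCoord_of_lt _ (mem_filter.1 hp).2.1, quadCoord_of_gt _ (mem_filter.1 hp).2.1]
    · exact prod_congr rfl fun j _ => by rw [quadCoord_self]
  · exact prod_congr rfl fun j _ => (zpow_add _ _ _).symm

end FreeNilp
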